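/- Let r > 0, let (X, d) and (Y, e) be metric spaces where d generates the topology of X, and let f : X → Y be a continuous surjective map. Define ρ : X × X → [0,∞) by ρ(x,y) = max(min(d(x,y), r), e(f(x), f(y))). Then ρ is a metric on X generating the topology of X, and for every finite r-separated subset E of Y there exists an isometric embedding of (E, e) into (X, ρ). -/

import Mathlib

open Set
open scoped ENNReal

/-- The space `Met(X)` of metrics generating the topology of `X`. -/
def MetricCompat (X : Type*) [t : TopologicalSpace X] : Type _ :=
  { m : MetricSpace X // m.toUniformSpace.toTopologicalSpace = t }

namespace MetricCompat

variable {X : Type*} [TopologicalSpace X]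

/-- The distance function of an element of `Met(X)`. -/
noncomputable def dist (d : MetricCompat X) (x y : X) : ℝ := d.1.dist x y

/-- The supremum distance `D_X`, valued in `[0,∞]`. -/
noncomputable def supDist (d e : MetricCompat X) : ℝ≥0∞ :=
  ⨆ p : X × X, ENNReal.ofReal |d.dist p.1 p.2 - e.dist p.1 p.2|

/-- The topology on `Met(X)` induced by the open balls of `D_X`. -/
noncomputable instance : TopologicalSpace (MetricCompat X) :=
  TopologicalSpace.generateFrom
    { U | ∃ (d : MetricCompat X) (r : ℝ≥0∞), 0 < r ∧ U = { e | supDist d e < r } }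

end MetricCompat

/-- A space is strongly `0`-dimensional if disjoint closed sets are separated by a clopen set. -/
def StronglyZeroDim (X : Type*) [TopologicalSpace X] : Prop :=
  ∀ A B : Set X, IsClosed A → IsClosed B → Disjoint A B →
    ∃ V : Set X, IsClopen V ∧ A ⊆ V ∧ Disjoint V B

/-!
Truncating `d` at `r` and taking the maximum with the pulled-back metric keeps the triangle
inequality. The `ρ`-balls of radius below `r` lie in the `d`-balls of the same radius, and
`ρ(x, ·)` is continuous because `f` is, so `ρ` generates the topology of `X`. On points whose
images are at least `r` apart the maximum is the `e`-term, so any section of `f` restricted to an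
`r`-separated set is an isometry.
-/

theorem min_add_le_min_add_min {a b r : ℝ} (ha : 0 ≤ a) (hb : 0 ≤ b) (hr : 0 ≤ r) :
    min (a + b) r ≤ min a r + min b r := by
  simp only [min_def]
  split_ifs <;> linarith

theorem min_dist_triangle {X : Type*} [PseudoMetricSpace X] {r : ℝ} (hr : 0 ≤ r) (x y z : X) :
    min (dist x z) r ≤ min (dist x y) r + min (dist y z) r :=
  (min_le_min_right r (dist_triangle x y z)).trans
    (min_add_le_min_add_min dist_nonneg dist_nonneg hr)

namespace PullbackMax

variable {X Y : Type*} [PseudoMetricSpace X] [PseudoMetricSpace Y]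

noncomputable def dist (r : ℝ) (f : X → Y) (x y : X) : ℝ :=
  max (min (Dist.dist x y) r) (Dist.dist (f x) (f y))

variable {r : ℝ} {f : X → Y}

theorem dist_self (hr : 0 ≤ r) (x : X) : dist r f x x = 0 := by
  simp [dist, hr]

theorem dist_comm (x y : X) : dist r f x y = dist r f y x := by
  simp only [dist, _root_.dist_comm]

theorem dist_triangle (hr : 0 ≤ r) (x y z : X) :
    dist r f x z ≤ dist r f x y + dist r f y z :=
  max_le
    ((min_dist_triangle hr x y z).trans (add_le_add (le_max_left _ _) (le_max_left _ _)))
    ((_root_.dist_triangle _ _ _).trans (add_le_add (le_max_right _ _) (le_max_right _ _)))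

theorem dist_lt_of_lt {x y : X} {ε : ℝ} (h : dist r f x y < ε) (hε : ε ≤ r) :
    Dist.dist x y < ε := by
  have h' : min (Dist.dist x y) r < ε := (le_max_left _ _).trans_lt h
  rwa [min_lt_iff, or_iff_left (hε.trans_lt' · |>.false)] at h'

theorem dist_pos {X : Type*} [MetricSpace X] {f : X → Y} (hr : 0 < r) {x y : X}
    (hxy : x ≠ y) : 0 < dist r f x y :=
  (lt_min (_root_.dist_pos.2 hxy) hr).trans_le (le_max_left _ _)

theorem eq_of_dist_eq_zero {X : Type*} [MetricSpace X] {f : X → Y} (hr : 0 < r) {x y : X}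
    (h : dist r f x y = 0) : x = y :=
  by_contra fun hxy => (dist_pos hr hxy).ne' h

theorem continuous_dist_left (hf : Continuous f) (x : X) : Continuous (dist r f x) :=
  ((continuous_const.dist continuous_id).min continuous_const).max
    (continuous_const.dist hf)

theorem isOpen_iff (hr : 0 < r) (hf : Continuous f) (s : Set X) :
    IsOpen s ↔ ∀ x ∈ s, ∃ ε > 0, ∀ y, dist r f x y < ε → y ∈ s := by
  refine ⟨fun hs x hx => ?_, fun h => isOpen_iff_mem_nhds.2 fun x hx => ?_⟩
  · obtain ⟨ε, hε, hball⟩ := Metric.isOpen_iff.1 hs x hx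
    exact ⟨min ε r, lt_min hε hr, fun y hy => hball <| Metric.mem_ball'.2 <|
      (dist_lt_of_lt hy (min_le_right ε r)).trans_le (min_le_left ε r)⟩
  · obtain ⟨ε, hε, hball⟩ := h x hx
    refine Filter.mem_of_superset ?_ hball
    exact (isOpen_lt (continuous_dist_left hf x) continuous_const).mem_nhds
      (by simpa [dist_self hr.le] using hε)

theorem dist_eq_of_le {x y : X} (h : r ≤ Dist.dist (f x) (f y)) :
    dist r f x y = Dist.dist (f x) (f y) :=
  max_eq_right ((min_le_right _ _).trans h)

theorem dist_rightInverse_of_pairwise (hr : 0 ≤ r) {g : Y → X} (hg : Function.RightInverse g f)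
    {E : Set Y} (hE : E.Pairwise (r ≤ Dist.dist · ·)) {a b : Y} (ha : a ∈ E) (hb : b ∈ E) :
    dist r f (g a) (g b) = Dist.dist a b := by
  obtain rfl | hab := eq_or_ne a b
  · rw [dist_self hr, _root_.dist_self]
  · rw [dist_eq_of_le] <;> rw [hg a, hg b]
    exact hE ha hb hab

noncomputable abbrev metricSpace {X : Type*} [MetricSpace X] {f : X → Y} (hr : 0 < r)
    (hf : Continuous f) : MetricSpace X :=
  .ofDistTopology (dist r f) (dist_self hr.le) dist_comm (dist_triangle hr.le) (isOpen_iff hr hf)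
    fun _ _ => eq_of_dist_eq_zero hr

end PullbackMax

theorem pullback_max_metric_universal
    {X Y : Type*} [MetricSpace X] [MetricSpace Y]
    (r : ℝ) (hr : 0 < r) (f : X → Y) (hf : Continuous f) (hfs : Function.Surjective f) :
    (∃ m : MetricCompat X,
      ∀ x y : X, m.dist x y = max (min (dist x y) r) (dist (f x) (f y))) ∧
    (∀ E : Set Y, E.Finite → (∀ a ∈ E, ∀ b ∈ E, a ≠ b → r ≤ dist a b) →
      ∃ φ : E → X, ∀ a b : E,
        max (min (dist (φ a) (φ b)) r) (dist (f (φ a)) (f (φ b))) = dist (a : Y) (b : Y)) := by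
  refine ⟨⟨⟨PullbackMax.metricSpace hr hf, rfl⟩, fun _ _ => rfl⟩, fun E _ hE => ?_⟩
  obtain ⟨g, hg⟩ := hfs.hasRightInverse
  exact ⟨fun a => g a, fun a b => PullbackMax.dist_rightInverse_of_pairwise hr.le hg hE a.2 b.2⟩
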